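/- Let p, q ∈ ℤ³ be fixed. Define unitary operators g(n) on ℓ²(ℤ)-valued L² functions of a ∈ ℝ³ by (g(n)ψ)_N(a) = exp(2πi N · det[a, p, n]) · ψ_{N − q·n}(a − n). Then g(n) g(m) = C'(a; n, m) · g(n+m) where C'(a; n, m) = exp(−2πi (q·m) det[a, p, n]), i.e., the g(n) form a projective representation of ℤ³ with multiplier C'. -/

import Mathlib

/-!
`det[a, p, ·]` is additive, so the phases of `g(n)` and `g(m)` combine to that of `g(n + m)`,
up to two corrections. The shift `a ↦ a − m` changes `det[a, p, n]` by `det[m, p, n]`, an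
integer, which multiplied by the integer `N − q·m` contributes a trivial phase; the component
shift `N ↦ N − q·m` leaves the term `−(q·m) det[a, p, n]`, which is the multiplier.
-/

/-- `det[a, p, n]`, the 3×3 determinant with rows `a ∈ ℝ³`, `p, n ∈ ℤ³`. -/
noncomputable def det3 (a : Fin 3 → ℝ) (p n : Fin 3 → ℤ) : ℝ :=
  a 0 * ((p 1 : ℝ) * (n 2 : ℝ) - (p 2 : ℝ) * (n 1 : ℝ)) +
  a 1 * ((p 2 : ℝ) * (n 0 : ℝ) - (p 0 : ℝ) * (n 2 : ℝ)) +
  a 2 * ((p 0 : ℝ) * (n 1 : ℝ) - (p 1 : ℝ) * (n 0 : ℝ))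

def dotZ (q n : Fin 3 → ℤ) : ℤ := ∑ i, q i * n i

/-- The operator `g(n)` acting on Fock-component functions `ψ : ℝ³ → ℤ → ℂ`,
`(g(n)ψ)_N(a) = e^{2πi N det[a,p,n]} ψ_{N − q·n}(a − n)`. -/
noncomputable def gOp (p q n : Fin 3 → ℤ) (ψ : (Fin 3 → ℝ) → ℤ → ℂ) :
    (Fin 3 → ℝ) → ℤ → ℂ :=
  fun a N => Complex.exp (2 * Real.pi * Complex.I * (N : ℝ) * det3 a p n) *
    ψ (fun i => a i - (n i : ℝ)) (N - dotZ q n)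

lemma det3_add_right (a : Fin 3 → ℝ) (p n m : Fin 3 → ℤ) :
    det3 a p (n + m) = det3 a p n + det3 a p m := by
  simp only [det3, Pi.add_apply, Int.cast_add]
  ring

lemma det3_sub_left (a b : Fin 3 → ℝ) (p n : Fin 3 → ℤ) :
    det3 (fun i => a i - b i) p n = det3 a p n - det3 b p n := by
  simp only [det3]
  ring

lemma exists_int_det3_intCast_left (m p n : Fin 3 → ℤ) :
    ∃ k : ℤ, det3 (fun i => (m i : ℝ)) p n = k :=
  ⟨m 0 * (p 1 * n 2 - p 2 * n 1) + m 1 * (p 2 * n 0 - p 0 * n 2) + m 2 * (p 0 * n 1 - p 1 * n 0),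
    by simp only [det3]; push_cast; ring⟩

lemma dotZ_add_right (q n m : Fin 3 → ℤ) : dotZ q (n + m) = dotZ q n + dotZ q m := by
  simp only [dotZ, Pi.add_apply, mul_add, Finset.sum_add_distrib]

theorem stmt5 (p q : Fin 3 → ℤ) (n m : Fin 3 → ℤ)
    (ψ : (Fin 3 → ℝ) → ℤ → ℂ) (a : Fin 3 → ℝ) (N : ℤ) :
    gOp p q m (gOp p q n ψ) a N
      = Complex.exp (-(2 * Real.pi * Complex.I) * ((dotZ q m : ℝ) * det3 a p n)) *
        gOp p q (n + m) ψ a N := by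
  obtain ⟨k, hk⟩ := exists_int_det3_intCast_left m p n
  have hshift : (fun i => a i - ((m i : ℝ) + n i)) = fun i => a i - ((n + m) i : ℝ) := by
    funext i
    push_cast [Pi.add_apply]
    ring
  simp only [gOp, sub_sub, hshift, dotZ_add_right, add_comm (dotZ q m)]
  rw [← mul_assoc, ← Complex.exp_add, ← mul_assoc, ← Complex.exp_add]
  congr 1
  rw [det3_sub_left, hk, det3_add_right]
  refine Complex.exp_eq_exp_iff_exists_int.mpr ⟨-(N - dotZ q m) * k, ?_⟩
  push_cast
  ring
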